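/- Let m and s be integers with 1 ≤ s ≤ m − 1. Then ∫_{{t ∈ ℝ^m : ‖t‖ < ε}} H_s(t) dt tends to 0 as ε tends to 0 from the right. -/

import Mathlib

open MeasureTheory

/-- The kernel `H_s(t) = (∏_{i=1}^s (|t_i| + ‖t‖²))⁻¹ · ‖t‖^{-(m-s-1)}` on `ℝ^m`. -/
noncomputable def Hker (m s : ℕ) (t : EuclideanSpace ℝ (Fin m)) : ℝ :=
  ((∏ i ∈ Finset.univ.filter (fun i : Fin m => (i : ℕ) < s), (|t i| + ‖t‖ ^ 2)) *
    ‖t‖ ^ (m - s - 1))⁻¹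

/-!
With `c = 1 - 1/(m+s) < 1`, weighted AM-GM gives `|tᵢ|^c ‖t‖^{2(1-c)} ≤ |tᵢ| + ‖t‖²` for `i < s`,
and `|tⱼ| ≤ ‖t‖` for the other coordinates; multiplying, `H_s(t) ≤ ∏ᵢ |tᵢ|^{-c}`. This is a product
of locally integrable one-variable singularities, so `H_s` is integrable on every ball, and by
absolute continuity of the integral its integral over the balls `‖t‖ < ε`, which shrink to a null
set, tends to `0`.
-/

open Set Filter Topology Metric

theorem intervalIntegrable_abs_rpow {r : ℝ} (hr : -1 < r) (a b : ℝ) :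
    IntervalIntegrable (fun x : ℝ => |x| ^ r) volume a b := by
  have hpos : ∀ c, 0 ≤ c → IntervalIntegrable (fun x : ℝ => |x| ^ r) volume 0 c := by
    intro c hc
    refine (intervalIntegral.intervalIntegrable_rpow' hr).congr fun x hx => ?_
    rw [uIoc_of_le hc] at hx
    simp [abs_of_pos hx.1]
  have hzero : ∀ c, IntervalIntegrable (fun x : ℝ => |x| ^ r) volume 0 c := by
    intro c
    rcases le_total 0 c with hc | hc
    · exact hpos c hc
    · rw [IntervalIntegrable.iff_comp_neg]
      simpa using hpos (-c) (neg_nonneg.2 hc)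
  exact (hzero a).symm.trans (hzero b)

theorem rpow_mul_rpow_le_add {a b θ : ℝ} (ha : 0 ≤ a) (hb : 0 ≤ b) (hθ₀ : 0 ≤ θ) (hθ₁ : θ ≤ 1) :
    a ^ θ * b ^ (1 - θ) ≤ a + b := by
  refine (Real.geom_mean_le_arith_mean2_weighted hθ₀ (sub_nonneg.2 hθ₁) ha hb (by ring)).trans ?_
  nlinarith

theorem MeasureTheory.Integrable.euclideanSpace_fintype_prod {ι : Type*} [Fintype ι] {f : ι → ℝ → ℝ}
    (hf : ∀ i, Integrable (f i)) : Integrable fun t : EuclideanSpace ℝ ι => ∏ i, f i (t i) := by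
  rw [← (PiLp.volume_preserving_toLp ι).integrable_comp_emb
    (MeasurableEquiv.toLp 2 _).measurableEmbedding]
  exact Integrable.fintype_prod hf

theorem EuclideanSpace.ae_forall_apply_ne_zero (ι : Type*) [Fintype ι] :
    ∀ᵐ t : EuclideanSpace ℝ ι, ∀ i, t i ≠ 0 := by
  refine ae_all_iff.2 fun i => ?_
  rw [ae_iff]
  simpa using ((EuclideanSpace.volume_preserving_symm_measurableEquiv_toLp ι).measure_preimage
    (measurableSet_eq_fun (measurable_pi_apply i) measurable_const).nullMeasurableSet).trans
    (Measure.pi_hyperplane _ i 0)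

theorem tendsto_setIntegral_ball_nhdsGT_zero {α E : Type*} [MetricSpace α] [ProperSpace α]
    [MeasurableSpace α] [OpensMeasurableSpace α] [NormedAddCommGroup E] [NormedSpace ℝ E]
    {μ : Measure α} [IsFiniteMeasureOnCompacts μ] [NullSingletonClass μ] {f : α → E} {x : α}
    {R : ℝ} (hR : 0 < R) (hf : IntegrableOn f (ball x R) μ) :
    Tendsto (fun ε => ∫ y in ball x ε, f y ∂μ) (𝓝[>] 0) (𝓝 0) := by
  have hmeas : Tendsto (μ.restrict (ball x R) ∘ ball x) (𝓝[>] 0) (𝓝 0) := by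
    have := tendsto_measure_biInter_gt (μ := μ.restrict (ball x R)) (s := ball x) (a := 0)
      (fun r _ => measurableSet_ball.nullMeasurableSet)
      (fun i j _ hij => ball_subset_ball hij)
      ⟨R, hR, ((Measure.restrict_apply_le _ _).trans_lt measure_ball_lt_top).ne⟩
    rwa [biInter_gt_ball, closedBall_zero, measure_singleton] at this
  refine (hf.tendsto_setIntegral_nhds_zero hmeas).congr' ?_
  filter_upwards [Ioo_mem_nhdsGT hR] with ε hε
  rw [Measure.restrict_restrict measurableSet_ball, inter_eq_left.2 (ball_subset_ball hε.2.le)]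

/-- Chosen so that the powers of `‖t‖` balance exactly: `2 (1 - c) s + (m - s - 1) = c (m - s)`. -/
noncomputable def HkerExponent (m s : ℕ) : ℝ := 1 - 1 / (m + s)

theorem HkerExponent_nonneg {m s : ℕ} (hm : 0 < m) : 0 ≤ HkerExponent m s := by
  have : (1 : ℝ) ≤ m + s := by norm_cast; omega
  exact sub_nonneg.2 (div_le_one_of_le₀ this (by positivity))

theorem HkerExponent_lt_one {m s : ℕ} (hm : 0 < m) : HkerExponent m s < 1 := by
  have : (0 : ℝ) < m + s := by norm_cast; omega
  exact sub_lt_self _ (one_div_pos.2 this)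

theorem prod_abs_rpow_le_inv_Hker {m s : ℕ} (hsm : s < m) {t : EuclideanSpace ℝ (Fin m)}
    (ht : t ≠ 0) : ∏ i, |t i| ^ HkerExponent m s ≤ (Hker m s t)⁻¹ := by
  set c := HkerExponent m s
  set r := ‖t‖
  have hr : 0 < r := norm_pos_iff.2 ht
  have hc₀ : 0 ≤ c := HkerExponent_nonneg (by omega)
  set A : Finset (Fin m) := Finset.univ.filter fun i => (i : ℕ) < s
  have hA : A.card = s := by rw [Fin.card_filter_val_lt]; omega
  have hAc : Aᶜ.card = m - s := by rw [Finset.card_compl, hA, Fintype.card_fin]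
  have hexp : 2 * (1 - c) * s + (m - s - 1 : ℕ) = c * (m - s : ℕ) := by
    have : (0 : ℝ) < m + s := by norm_cast; omega
    simp only [c, HkerExponent]
    push_cast [Nat.cast_sub (by omega : s ≤ m), Nat.cast_sub (by omega : 1 ≤ m - s)]
    field_simp
    ring
  rw [Hker, inv_inv, ← Finset.prod_mul_prod_compl A]
  calc (∏ i ∈ A, |t i| ^ c) * ∏ i ∈ Aᶜ, |t i| ^ c
      ≤ (∏ i ∈ A, |t i| ^ c) * ∏ i ∈ Aᶜ, r ^ c := by
        gcongr with i
        exact PiLp.norm_apply_le t i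
    _ = (∏ i ∈ A, |t i| ^ c * (r ^ 2) ^ (1 - c)) * r ^ (m - s - 1) := by
        rw [Finset.prod_mul_distrib, Finset.prod_const, Finset.prod_const, hA, hAc, mul_assoc,
          ← Real.rpow_natCast, ← Real.rpow_natCast _ (m - s - 1), ← Real.rpow_mul hr.le,
          ← Real.rpow_natCast (_ ^ _), ← Real.rpow_two, ← Real.rpow_mul hr.le,
          ← Real.rpow_mul hr.le, ← Real.rpow_add hr, ← hexp]
    _ ≤ (∏ i ∈ A, (|t i| + r ^ 2)) * r ^ (m - s - 1) := by
        gcongr with i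
        exact rpow_mul_rpow_le_add (abs_nonneg _) (sq_nonneg r) hc₀
          (HkerExponent_lt_one (by omega)).le

/-- Since `0 ^ (-c) = 0`, the bound needs every coordinate to be nonzero. -/
theorem Hker_le_prod_abs_rpow_neg {m s : ℕ} (hsm : s < m) {t : EuclideanSpace ℝ (Fin m)}
    (ht : ∀ i, t i ≠ 0) : Hker m s t ≤ ∏ i, |t i| ^ (-HkerExponent m s) := by
  have ht₀ : t ≠ 0 := fun h => ht ⟨0, by omega⟩ (by simp [h])
  have hprod : 0 < ∏ i, |t i| ^ HkerExponent m s :=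
    Finset.prod_pos fun i _ => Real.rpow_pos_of_pos (abs_pos.2 (ht i)) _
  calc Hker m s t = ((Hker m s t)⁻¹)⁻¹ := (inv_inv _).symm
    _ ≤ (∏ i, |t i| ^ HkerExponent m s)⁻¹ := inv_anti₀ hprod (prod_abs_rpow_le_inv_Hker hsm ht₀)
    _ = ∏ i, |t i| ^ (-HkerExponent m s) := by
        simp_rw [← Finset.prod_inv_distrib, Real.rpow_neg (abs_nonneg _)]

theorem integrableOn_Hker_ball {m s : ℕ} (hsm : s < m) (R : ℝ) :
    IntegrableOn (Hker m s) (ball 0 R) := by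
  set φ : ℝ → ℝ := (Ioo (-R) R).indicator fun x => |x| ^ (-HkerExponent m s)
  have hφ : Integrable φ :=
    (integrable_indicator_iff measurableSet_Ioo).2 <|
      (intervalIntegrable_abs_rpow (by linarith [HkerExponent_lt_one (s := s) (by omega : 0 < m)])
        (-R) R).def'.mono_set (Ioo_subset_Ioc_self.trans Ioc_subset_uIoc)
  have hmeas : Measurable (Hker m s) := by unfold Hker; fun_prop
  refine (Integrable.euclideanSpace_fintype_prod fun _ => hφ).integrableOn.mono'
    hmeas.aestronglyMeasurable ?_
  filter_upwards [ae_restrict_of_ae (EuclideanSpace.ae_forall_apply_ne_zero (Fin m)),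
    ae_restrict_mem measurableSet_ball] with t ht htR
  have hmem : ∀ i, t i ∈ Ioo (-R) R := fun i =>
    abs_lt.1 ((PiLp.norm_apply_le t i).trans_lt (mem_ball_zero_iff.1 htR))
  rw [Real.norm_of_nonneg (by unfold Hker; positivity)]
  simpa only [φ, indicator_of_mem (hmem _)] using Hker_le_prod_abs_rpow_neg hsm ht

theorem tendsto_integral_Hker_ball_general (m s : ℕ) (hsm : s + 1 ≤ m) :
    Filter.Tendsto
      (fun ε : ℝ => ∫ t in {t : EuclideanSpace ℝ (Fin m) | ‖t‖ < ε}, Hker m s t)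
      (nhdsWithin 0 (Set.Ioi 0)) (nhds 0) := by
  have hball : ∀ ε : ℝ, {t : EuclideanSpace ℝ (Fin m) | ‖t‖ < ε} = ball 0 ε := fun ε => by
    ext; simp
  -- makes `ℝ^m` nontrivial, so that points are null for `volume`
  have : Nonempty (Fin m) := ⟨⟨0, by omega⟩⟩
  simp_rw [hball]
  exact tendsto_setIntegral_ball_nhdsGT_zero one_pos (integrableOn_Hker_ball hsm 1)

/-- For `1 ≤ s ≤ m - 1`, the integral of `H_s` over the ball of radius `ε` tends to `0` as
`ε → 0⁺`. -/
theorem tendsto_integral_Hker_ball (m s : ℕ) (hs : 1 ≤ s) (hsm : s + 1 ≤ m) :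
    Filter.Tendsto
      (fun ε : ℝ => ∫ t in {t : EuclideanSpace ℝ (Fin m) | ‖t‖ < ε}, Hker m s t)
      (nhdsWithin 0 (Set.Ioi 0)) (nhds 0) :=
  tendsto_integral_Hker_ball_general m s hsm
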